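/- arXiv:1706.02793 — 2 statements merged into one kernel-verified Lean document; each statement's English description precedes it below -/
import Mathlib

section
/- Let α, β, γ ∈ ℝ³ with α₁ ≥ α₂ ≥ α₃, β₁ ≥ β₂ ≥ β₃, γ₁ ≥ γ₂ ≥ γ₃, ∑γ_i = ∑α_i + ∑β_i, and suppose γ lies in the Horn polytope H̃_{αβ}. Then 𝒥₃(α,β;γ) ≥ 0. -/
open scoped Real

/-- The piecewise-linear function `ψ_{αβ}(γ)` of the paper, with
`x₁ = γ₁−α₁−β₂`, `x₂ = γ₂−α₃−β₁`, `x₃ = γ₃−α₂−β₃`. -/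
noncomputable def psi3 (a b g : Fin 3 → ℝ) : ℝ :=
  if 0 ≤ g 1 - a 2 - b 0 ∧ g 0 - a 0 - b 1 < 0 then
    (g 1 - a 2 - b 0) - (g 0 - a 0 - b 1)
  else if 0 ≤ g 2 - a 1 - b 2 ∧ g 1 - a 2 - b 0 < 0 then
    (g 2 - a 1 - b 2) - (g 1 - a 2 - b 0)
  else if 0 ≤ g 0 - a 0 - b 1 ∧ g 2 - a 1 - b 2 < 0 then
    (g 0 - a 0 - b 1) - (g 2 - a 1 - b 2)
  else 0

/-- The kernel function `𝒥₃(α,β;γ)`. -/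
noncomputable def J3 (a b g : Fin 3 → ℝ) : ℝ :=
  (1 / 6) * (a 0 - a 2 + (b 0 - b 2) + (g 0 - g 2))
    - (1 / 2) * |a 1 + b 1 - g 1|
    - (1 / 3) * psi3 a b g - (1 / 3) * psi3 b a g

/-- `a` is the weakly decreasing sequence of eigenvalues of the Hermitian matrix `A`. -/
def IsEigSeq {k : ℕ} (A : Matrix (Fin k) (Fin k) ℂ) (a : Fin k → ℝ) : Prop :=
  Antitone a ∧ ∃ (hA : A.IsHermitian) (σ : Equiv.Perm (Fin k)), hA.eigenvalues ∘ σ = a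

/-- `γ` lies in the Horn polytope `H̃_{αβ}`. -/
def HornMem {k : ℕ} (a b g : Fin k → ℝ) : Prop :=
  ∃ A B : Matrix (Fin k) (Fin k) ℂ, IsEigSeq A a ∧ IsEigSeq B b ∧ IsEigSeq (A + B) g

open scoped InnerProductSpace
open Finset Module

/-!
Weyl's inequalities come from a dimension count: for `i + j ≤ k` (indices from `0`), a nonzero
vector orthogonal to the first `i` eigenvectors of `A`, the first `j` of `B` and the last
`n - 1 - k` of `A + B` exists, and comparing its Rayleigh quotients gives
`γ_k ≤ α_i + β_j`; applied to `-A`, `-B` they give `α_i + β_j ≤ γ_k` for `k + n - 1 ≤ i + j`.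
Since `x₁ + x₂ + x₃ = 0`, `ψ` is the largest of the three cyclic differences `x₂ - x₁`,
`x₃ - x₂`, `x₁ - x₃`, so `𝒥₃` is a minimum of affine functions, each of which is nonnegative
by the twelve Weyl inequalities for `n = 3`, the ordering and the trace condition.
-/

section Eigenbasis

variable {𝕜 E : Type*} [RCLike 𝕜] [NormedAddCommGroup E] [InnerProductSpace 𝕜 E]

lemma exists_ne_zero_forall_inner_eq_zero [FiniteDimensional 𝕜 E] (s : Finset E)
    (hs : #s < finrank 𝕜 E) : ∃ x ≠ (0 : E), ∀ v ∈ s, ⟪v, x⟫_𝕜 = 0 := by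
  have hspan : Submodule.span 𝕜 (s : Set E) ≠ ⊤ := fun h => by
    have := finrank_span_finset_le_card (R := 𝕜) s
    rw [Set.finrank, h, finrank_top] at this
    omega
  obtain ⟨x, hx, hx0⟩ :=
    Submodule.exists_mem_ne_zero_of_ne_bot (mt Submodule.orthogonal_eq_bot_iff.1 hspan)
  exact ⟨x, hx0, fun v hv => hx v (Submodule.subset_span hv)⟩

variable {ι : Type*} [Fintype ι]

def HasOrthonormalEigenbasis (T : E →ₗ[𝕜] E) (a : ι → ℝ) : Prop :=
  ∃ u : OrthonormalBasis ι 𝕜 E, ∀ i, T (u i) = (a i : 𝕜) • u i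

lemma re_inner_map_self_eq_sum {T : E →ₗ[𝕜] E} {a : ι → ℝ} (u : OrthonormalBasis ι 𝕜 E)
    (hu : ∀ i, T (u i) = (a i : 𝕜) • u i) (x : E) :
    RCLike.re ⟪x, T x⟫_𝕜 = ∑ i, a i * ‖⟪u i, x⟫_𝕜‖ ^ 2 := by
  have hTx : T x = ∑ i, ((a i : 𝕜) * ⟪u i, x⟫_𝕜) • u i := by
    conv_lhs => rw [← u.sum_repr' x]
    simp [hu, smul_smul, mul_comm]
  rw [hTx, inner_sum, map_sum]
  refine sum_congr rfl fun i _ => ?_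
  rw [inner_smul_right, ← inner_conj_symm x (u i), mul_assoc, RCLike.mul_conj]
  norm_cast

lemma re_inner_map_self_le {T : E →ₗ[𝕜] E} {a : ι → ℝ} (u : OrthonormalBasis ι 𝕜 E)
    (hu : ∀ i, T (u i) = (a i : 𝕜) • u i) {x : E} {P : Finset ι} (hx : ∀ i ∈ P, ⟪u i, x⟫_𝕜 = 0)
    {c : ℝ} (hc : ∀ i ∉ P, a i ≤ c) : RCLike.re ⟪x, T x⟫_𝕜 ≤ c * ‖x‖ ^ 2 := by
  rw [re_inner_map_self_eq_sum u hu, ← u.sum_sq_norm_inner_right, mul_sum]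
  refine sum_le_sum fun i _ => ?_
  by_cases hi : i ∈ P
  · simp [hx i hi]
  · exact mul_le_mul_of_nonneg_right (hc i hi) (sq_nonneg _)

lemma le_re_inner_map_self {T : E →ₗ[𝕜] E} {a : ι → ℝ} (u : OrthonormalBasis ι 𝕜 E)
    (hu : ∀ i, T (u i) = (a i : 𝕜) • u i) {x : E} {P : Finset ι} (hx : ∀ i ∈ P, ⟪u i, x⟫_𝕜 = 0)
    {c : ℝ} (hc : ∀ i ∉ P, c ≤ a i) : c * ‖x‖ ^ 2 ≤ RCLike.re ⟪x, T x⟫_𝕜 := by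
  rw [re_inner_map_self_eq_sum u hu, ← u.sum_sq_norm_inner_right, mul_sum]
  refine sum_le_sum fun i _ => ?_
  by_cases hi : i ∈ P
  · simp [hx i hi]
  · exact mul_le_mul_of_nonneg_right (hc i hi) (sq_nonneg _)

namespace HasOrthonormalEigenbasis

variable {T S : E →ₗ[𝕜] E}

lemma neg {a : ι → ℝ} (h : HasOrthonormalEigenbasis T a) : HasOrthonormalEigenbasis (-T) (-a) := by
  obtain ⟨u, hu⟩ := h
  exact ⟨u, fun i => by simp [hu i]⟩

lemma comp_equiv {ι' : Type*} [Fintype ι'] {a : ι → ℝ} (h : HasOrthonormalEigenbasis T a)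
    (e : ι' ≃ ι) : HasOrthonormalEigenbasis T (a ∘ e) := by
  obtain ⟨u, hu⟩ := h
  exact ⟨u.reindex e.symm, fun i => by simp [hu]⟩

theorem le_add_of_card_lt {a b g : ι → ℝ} (hT : HasOrthonormalEigenbasis T a)
    (hS : HasOrthonormalEigenbasis S b) (hTS : HasOrthonormalEigenbasis (T + S) g)
    {P Q R : Finset ι} (hcard : #P + #Q + #R < Fintype.card ι) {ca cb cg : ℝ}
    (ha : ∀ i ∉ P, a i ≤ ca) (hb : ∀ i ∉ Q, b i ≤ cb) (hg : ∀ i ∉ R, cg ≤ g i) :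
    cg ≤ ca + cb := by
  classical
  obtain ⟨u, hu⟩ := hT
  obtain ⟨v, hv⟩ := hS
  obtain ⟨w, hw⟩ := hTS
  have : FiniteDimensional 𝕜 E := u.toBasis.finiteDimensional_of_finite
  obtain ⟨x, hx0, hx⟩ :=
    exists_ne_zero_forall_inner_eq_zero (P.image u ∪ Q.image v ∪ R.image w) <| by
      rw [finrank_eq_card_basis u.toBasis]
      grw [card_union_le, card_union_le, card_image_le, card_image_le, card_image_le]
      exact hcard
  have hxT := re_inner_map_self_le u hu
    (fun i hi => hx _ (mem_union_left _ (mem_union_left _ (mem_image_of_mem u hi)))) ha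
  have hxS := re_inner_map_self_le v hv
    (fun i hi => hx _ (mem_union_left _ (mem_union_right _ (mem_image_of_mem v hi)))) hb
  have hxTS := le_re_inner_map_self w hw
    (fun i hi => hx _ (mem_union_right _ (mem_image_of_mem w hi))) hg
  rw [LinearMap.add_apply, inner_add_right, map_add] at hxTS
  exact le_of_mul_le_mul_right (by linarith : cg * ‖x‖ ^ 2 ≤ (ca + cb) * ‖x‖ ^ 2) (by positivity)

variable {n : ℕ} {a b g : Fin n → ℝ}

theorem weyl_upper (ha : Antitone a) (hb : Antitone b) (hg : Antitone g)
    (hT : HasOrthonormalEigenbasis T a) (hS : HasOrthonormalEigenbasis S b)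
    (hTS : HasOrthonormalEigenbasis (T + S) g) {i j k : Fin n} (hijk : (i : ℕ) + j ≤ k) : g k ≤ a i + b j :=
  hT.le_add_of_card_lt hS hTS (P := Iio i) (Q := Iio j) (R := Ioi k)
    (by simp only [Fin.card_Iio, Fin.card_Ioi, Fintype.card_fin]; omega)
    (fun _ hl => ha (not_lt.1 (by simpa using hl))) (fun _ hl => hb (not_lt.1 (by simpa using hl)))
    (fun _ hl => hg (not_lt.1 (by simpa using hl)))

theorem weyl_lower (ha : Antitone a) (hb : Antitone b) (hg : Antitone g)
    (hT : HasOrthonormalEigenbasis T a) (hS : HasOrthonormalEigenbasis S b)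
    (hTS : HasOrthonormalEigenbasis (T + S) g) {i j k : Fin n}
    (hijk : (k : ℕ) + (n - 1) ≤ i + j) : a i + b j ≤ g k := by
  have hrev {c : Fin n → ℝ} (hc : Antitone c) : Antitone ((-c) ∘ Fin.revPerm) :=
    fun _ _ h => neg_le_neg (hc (Fin.rev_le_rev.2 h))
  have hTS' : HasOrthonormalEigenbasis (-T + -S) (-g) := by rw [← neg_add]; exact hTS.neg
  have := weyl_upper (hrev ha) (hrev hb) (hrev hg) (hT.neg.comp_equiv _) (hS.neg.comp_equiv _)
    (hTS'.comp_equiv _) (i := i.rev) (j := j.rev) (k := k.rev) (by simp only [Fin.val_rev]; omega)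
  simp only [Function.comp_apply, Fin.revPerm_apply, Fin.rev_rev, Pi.neg_apply] at this
  linarith

end HasOrthonormalEigenbasis

end Eigenbasis

lemma IsEigSeq.hasOrthonormalEigenbasis {n : ℕ} {A : Matrix (Fin n) (Fin n) ℂ} {a : Fin n → ℝ}
    (h : IsEigSeq A a) : HasOrthonormalEigenbasis (Matrix.toEuclideanLin A) a := by
  obtain ⟨-, hA, σ, rfl⟩ := h
  refine HasOrthonormalEigenbasis.comp_equiv ⟨hA.eigenvectorBasis, fun i => ?_⟩ σ
  ext j
  simpa [Matrix.toLpLin_apply] using congr_fun (hA.mulVec_eigenvectorBasis i) j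

namespace HornMem

variable {n : ℕ} {a b g : Fin n → ℝ}

theorem weyl_upper (h : HornMem a b g) {i j k : Fin n} (hijk : (i : ℕ) + j ≤ k) :
    g k ≤ a i + b j := by
  obtain ⟨A, B, hA, hB, hAB⟩ := h
  exact HasOrthonormalEigenbasis.weyl_upper hA.1 hB.1 hAB.1 hA.hasOrthonormalEigenbasis
    hB.hasOrthonormalEigenbasis (by simpa using hAB.hasOrthonormalEigenbasis) hijk

theorem weyl_lower (h : HornMem a b g) {i j k : Fin n} (hijk : (k : ℕ) + (n - 1) ≤ i + j) :
    a i + b j ≤ g k := by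
  obtain ⟨A, B, hA, hB, hAB⟩ := h
  exact HasOrthonormalEigenbasis.weyl_lower hA.1 hB.1 hAB.1 hA.hasOrthonormalEigenbasis
    hB.hasOrthonormalEigenbasis (by simpa using hAB.hasOrthonormalEigenbasis) hijk

end HornMem

lemma ite_cyclic_eq_max {x y z : ℝ} (h : x + y + z = 0) :
    (if 0 ≤ y ∧ x < 0 then y - x else if 0 ≤ z ∧ y < 0 then z - y
      else if 0 ≤ x ∧ z < 0 then x - z else 0) = max (max (y - x) (z - y)) (x - z) := by
  grind

lemma psi3_eq_max (a b g : Fin 3 → ℝ)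
    (h : (g 0 - a 0 - b 1) + (g 1 - a 2 - b 0) + (g 2 - a 1 - b 2) = 0) :
    psi3 a b g = max (max ((g 1 - a 2 - b 0) - (g 0 - a 0 - b 1))
      ((g 2 - a 1 - b 2) - (g 1 - a 2 - b 0))) ((g 0 - a 0 - b 1) - (g 2 - a 1 - b 2)) :=
  ite_cyclic_eq_max h

theorem J3_nonneg_of_weyl (a b g : Fin 3 → ℝ)
    (ha : a 1 ≤ a 0 ∧ a 2 ≤ a 1) (hb : b 1 ≤ b 0 ∧ b 2 ≤ b 1) (hg : g 1 ≤ g 0 ∧ g 2 ≤ g 1)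
    (htr : g 0 + g 1 + g 2 = a 0 + a 1 + a 2 + (b 0 + b 1 + b 2))
    (hup : ∀ i j k : Fin 3, (i : ℕ) + j ≤ k → g k ≤ a i + b j)
    (hlow : ∀ i j k : Fin 3, (k : ℕ) + 2 ≤ i + j → a i + b j ≤ g k) :
    0 ≤ J3 a b g := by
  have := hup 0 0 0 (by decide)
  have := hup 0 1 1 (by decide)
  have := hup 1 0 1 (by decide)
  have := hup 0 2 2 (by decide)
  have := hup 1 1 2 (by decide)
  have := hup 2 0 2 (by decide)
  have := hlow 2 2 2 (by decide)
  have := hlow 1 2 1 (by decide)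
  have := hlow 2 1 1 (by decide)
  have := hlow 0 2 0 (by decide)
  have := hlow 1 1 0 (by decide)
  have := hlow 2 0 0 (by decide)
  rw [J3, psi3_eq_max a b g (by linarith), psi3_eq_max b a g (by linarith), abs_eq_max_neg]
  grind

theorem stmt5 (a b g : Fin 3 → ℝ)
    (ha : a 1 ≤ a 0 ∧ a 2 ≤ a 1) (hb : b 1 ≤ b 0 ∧ b 2 ≤ b 1) (hg : g 1 ≤ g 0 ∧ g 2 ≤ g 1)
    (htr : g 0 + g 1 + g 2 = a 0 + a 1 + a 2 + (b 0 + b 1 + b 2))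
    (hH : HornMem a b g) :
    0 ≤ J3 a b g :=
  J3_nonneg_of_weyl a b g ha hb hg htr (fun _ _ _ h => hH.weyl_upper h)
    (fun _ _ _ h => hH.weyl_lower h)
end

section
/- Let α, β, γ ∈ ℤ³ with α₁ ≥ α₂ ≥ α₃, β₁ ≥ β₂ ≥ β₃, γ₁ ≥ γ₂ ≥ γ₃, ∑γ_i = ∑α_i + ∑β_i, and suppose γ lies in the Horn polytope H̃_{αβ}. Then 𝒥₃(α,β;γ) is a nonnegative integer. -/
open scoped Real

/-!
Membership in the Horn polytope is used only through Weyl's inequalities `γ_k ≤ α_i + β_j` for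
`i + j ≤ k` and `α_i + β_j ≤ γ_k` for `k + n ≤ i + j + 1` (indices from `0`), which for `n = 3`
are all of Horn's inequalities. Each follows from the Courant–Fischer argument: three spans of
eigenvectors whose dimensions add up to more than `2n` share a nonzero vector `x`, and comparing
the Rayleigh quotients of `A`, `B` and `A + B` at `x` gives the inequality. Splitting into the
cases of `|α₂ + β₂ - γ₂|`, `ψ_{αβ}` and `ψ_{βα}`, `6 𝒥₃` becomes an integer linear form in each
case, which these inequalities, the ordering and the trace condition force to be a nonnegative
multiple of `6`.
-/

open Module Submodule
open scoped InnerProductSpace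

theorem Submodule.exists_ne_zero_mem_inf_inf_of_finrank_lt {K V : Type*} [DivisionRing K]
    [AddCommGroup V] [Module K V] [FiniteDimensional K V] (U W X : Submodule K V)
    (h : 2 * finrank K V < finrank K U + finrank K W + finrank K X) :
    ∃ x ∈ U ⊓ W ⊓ X, x ≠ 0 := by
  refine (Submodule.ne_bot_iff _).mp fun hbot => ?_
  have hUW := finrank_sup_add_finrank_inf_eq U W
  have hsup := (U ⊔ W).finrank_le
  have := finrank_add_finrank_le_of_disjoint (disjoint_iff.mpr hbot)
  omega

theorem LinearIndependent.finrank_span_image_finset {R M ι : Type*} [Ring R] [Nontrivial R]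
    [StrongRankCondition R] [AddCommGroup M] [Module R M] {b : ι → M}
    (hb : LinearIndependent R b) (s : Finset ι) :
    finrank R (span R (b '' s)) = s.card := by
  rw [Set.image_eq_range]
  exact (finrank_span_eq_card (hb.comp _ Subtype.val_injective)).trans (Fintype.card_coe s)

section Rayleigh

open RCLike ComplexConjugate

variable {𝕜 E ι : Type*} [RCLike 𝕜] [NormedAddCommGroup E] [InnerProductSpace 𝕜 E]

theorem Orthonormal.inner_eq_zero_of_mem_span {v : ι → E} (hv : Orthonormal 𝕜 v) {s : Set ι}
    {x : E} (hx : x ∈ span 𝕜 (v '' s)) {i : ι} (hi : i ∉ s) : ⟪v i, x⟫_𝕜 = 0 := by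
  have hortho : span 𝕜 {v i} ⟂ span 𝕜 (v '' s) := by
    rw [isOrtho_span]
    rintro _ rfl _ ⟨j, hj, rfl⟩
    exact hv.2 fun hij => hi (hij ▸ hj)
  exact hortho.inner_eq (subset_span rfl) hx

variable [Fintype ι] {T : E →ₗ[𝕜] E} {b : OrthonormalBasis ι 𝕜 E} {μ : ι → ℝ}

theorem re_inner_map_self_eq_sum_s7 (hT : ∀ i, T (b i) = (μ i : 𝕜) • b i) (x : E) :
    re ⟪x, T x⟫_𝕜 = ∑ i, μ i * ‖⟪b i, x⟫_𝕜‖ ^ 2 := by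
  have hTx : T x = ∑ i, ((μ i : 𝕜) * ⟪b i, x⟫_𝕜) • b i := by
    conv_lhs => rw [← b.sum_repr' x]
    simp only [map_sum, map_smul, hT, smul_smul, mul_comm]
  nth_rw 1 [hTx, ← b.sum_repr' x]
  rw [b.orthonormal.inner_sum, map_sum]
  refine Finset.sum_congr rfl fun i _ => ?_
  rw [mul_left_comm, RCLike.conj_mul, ← ofReal_pow, ← ofReal_mul, ofReal_re]

theorem re_inner_map_self_le_of_mem_span (hT : ∀ i, T (b i) = (μ i : 𝕜) • b i) {s : Set ι}
    {c : ℝ} (hc : ∀ i ∈ s, μ i ≤ c) {x : E} (hx : x ∈ span 𝕜 (b '' s)) :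
    re ⟪x, T x⟫_𝕜 ≤ c * ‖x‖ ^ 2 := by
  rw [re_inner_map_self_eq_sum_s7 hT, ← b.sum_sq_norm_inner_right, Finset.mul_sum]
  refine Finset.sum_le_sum fun i _ => ?_
  by_cases hi : i ∈ s
  · exact mul_le_mul_of_nonneg_right (hc i hi) (sq_nonneg _)
  · simp [b.orthonormal.inner_eq_zero_of_mem_span hx hi]

theorem le_re_inner_map_self_of_mem_span (hT : ∀ i, T (b i) = (μ i : 𝕜) • b i) {s : Set ι}
    {c : ℝ} (hc : ∀ i ∈ s, c ≤ μ i) {x : E} (hx : x ∈ span 𝕜 (b '' s)) :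
    c * ‖x‖ ^ 2 ≤ re ⟪x, T x⟫_𝕜 := by
  rw [re_inner_map_self_eq_sum_s7 hT, ← b.sum_sq_norm_inner_right, Finset.mul_sum]
  refine Finset.sum_le_sum fun i _ => ?_
  by_cases hi : i ∈ s
  · exact mul_le_mul_of_nonneg_right (hc i hi) (sq_nonneg _)
  · simp [b.orthonormal.inner_eq_zero_of_mem_span hx hi]

end Rayleigh

open Matrix

namespace IsEigSeq

variable {n : ℕ} {A B : Matrix (Fin n) (Fin n) ℂ} {a b g : Fin n → ℝ}

theorem exists_orthonormalBasis (h : IsEigSeq A a) :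
    ∃ v : OrthonormalBasis (Fin n) ℂ (EuclideanSpace ℂ (Fin n)),
      ∀ i, toEuclideanLin A (v i) = (a i : ℂ) • v i := by
  obtain ⟨-, hA, σ, rfl⟩ := h
  refine ⟨hA.eigenvectorBasis.reindex σ.symm, fun i => ?_⟩
  rw [OrthonormalBasis.reindex_apply, Equiv.symm_symm]
  ext j
  simpa [Complex.real_smul] using congrFun (hA.mulVec_eigenvectorBasis (σ i)) j

theorem weyl_upper (hA : IsEigSeq A a) (hB : IsEigSeq B b) (hC : IsEigSeq (A + B) g)
    {i j k : Fin n} (hk : (i : ℕ) + j ≤ k) : g k ≤ a i + b j := by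
  obtain ⟨u, hu⟩ := hA.exists_orthonormalBasis
  obtain ⟨v, hv⟩ := hB.exists_orthonormalBasis
  obtain ⟨w, hw⟩ := hC.exists_orthonormalBasis
  obtain ⟨x, ⟨⟨hxu, hxv⟩, hxw⟩, hx0⟩ := exists_ne_zero_mem_inf_inf_of_finrank_lt
    (span ℂ (u '' Finset.Ici i)) (span ℂ (v '' Finset.Ici j)) (span ℂ (w '' Finset.Iic k)) (by
      rw [finrank_euclideanSpace_fin, u.orthonormal.linearIndependent.finrank_span_image_finset,
        v.orthonormal.linearIndependent.finrank_span_image_finset,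
        w.orthonormal.linearIndependent.finrank_span_image_finset, Fin.card_Ici, Fin.card_Ici,
        Fin.card_Iic]
      omega)
  have hxA := re_inner_map_self_le_of_mem_span hu (fun t ht => hA.1 (Finset.mem_Ici.1 ht)) hxu
  have hxB := re_inner_map_self_le_of_mem_span hv (fun t ht => hB.1 (Finset.mem_Ici.1 ht)) hxv
  have hxC := le_re_inner_map_self_of_mem_span hw (fun t ht => hC.1 (Finset.mem_Iic.1 ht)) hxw
  rw [map_add, LinearMap.add_apply, inner_add_right, map_add] at hxC
  have : 0 < ‖x‖ ^ 2 := by positivity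
  nlinarith

theorem weyl_lower (hA : IsEigSeq A a) (hB : IsEigSeq B b) (hC : IsEigSeq (A + B) g)
    {i j k : Fin n} (hk : (k : ℕ) + n ≤ i + j + 1) : a i + b j ≤ g k := by
  obtain ⟨u, hu⟩ := hA.exists_orthonormalBasis
  obtain ⟨v, hv⟩ := hB.exists_orthonormalBasis
  obtain ⟨w, hw⟩ := hC.exists_orthonormalBasis
  obtain ⟨x, ⟨⟨hxu, hxv⟩, hxw⟩, hx0⟩ := exists_ne_zero_mem_inf_inf_of_finrank_lt
    (span ℂ (u '' Finset.Iic i)) (span ℂ (v '' Finset.Iic j)) (span ℂ (w '' Finset.Ici k)) (by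
      rw [finrank_euclideanSpace_fin, u.orthonormal.linearIndependent.finrank_span_image_finset,
        v.orthonormal.linearIndependent.finrank_span_image_finset,
        w.orthonormal.linearIndependent.finrank_span_image_finset, Fin.card_Iic, Fin.card_Iic,
        Fin.card_Ici]
      omega)
  have hxA := le_re_inner_map_self_of_mem_span hu (fun t ht => hA.1 (Finset.mem_Iic.1 ht)) hxu
  have hxB := le_re_inner_map_self_of_mem_span hv (fun t ht => hB.1 (Finset.mem_Iic.1 ht)) hxv
  have hxC := re_inner_map_self_le_of_mem_span hw (fun t ht => hC.1 (Finset.mem_Ici.1 ht)) hxw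
  rw [map_add, LinearMap.add_apply, inner_add_right, map_add] at hxC
  have : 0 < ‖x‖ ^ 2 := by positivity
  nlinarith

end IsEigSeq

def psi3Int (a b g : Fin 3 → ℤ) : ℤ :=
  if 0 ≤ g 1 - a 2 - b 0 ∧ g 0 - a 0 - b 1 < 0 then
    (g 1 - a 2 - b 0) - (g 0 - a 0 - b 1)
  else if 0 ≤ g 2 - a 1 - b 2 ∧ g 1 - a 2 - b 0 < 0 then
    (g 2 - a 1 - b 2) - (g 1 - a 2 - b 0)
  else if 0 ≤ g 0 - a 0 - b 1 ∧ g 2 - a 1 - b 2 < 0 then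
    (g 0 - a 0 - b 1) - (g 2 - a 1 - b 2)
  else 0

def sixJ3Int (a b g : Fin 3 → ℤ) : ℤ :=
  a 0 - a 2 + (b 0 - b 2) + (g 0 - g 2) - 3 * |a 1 + b 1 - g 1|
    - 2 * psi3Int a b g - 2 * psi3Int b a g

theorem psi3_intCast (a b g : Fin 3 → ℤ) :
    psi3 (fun i => (a i : ℝ)) (fun i => (b i : ℝ)) (fun i => (g i : ℝ)) = psi3Int a b g := by
  rw [psi3, psi3Int]
  push_cast [apply_ite (Int.cast : ℤ → ℝ)]
  norm_cast

theorem J3_intCast (a b g : Fin 3 → ℤ) :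
    J3 (fun i => (a i : ℝ)) (fun i => (b i : ℝ)) (fun i => (g i : ℝ)) = sixJ3Int a b g / 6 := by
  rw [J3, psi3_intCast, psi3_intCast, sixJ3Int]
  push_cast
  ring

theorem sixJ3Int_nonneg_and_dvd {a b g : Fin 3 → ℤ}
    (ha : a 1 ≤ a 0 ∧ a 2 ≤ a 1) (hb : b 1 ≤ b 0 ∧ b 2 ≤ b 1) (hg : g 1 ≤ g 0 ∧ g 2 ≤ g 1)
    (htr : g 0 + g 1 + g 2 = a 0 + a 1 + a 2 + (b 0 + b 1 + b 2))
    (hup : ∀ i j k : Fin 3, (i : ℕ) + j ≤ k → g k ≤ a i + b j)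
    (hlo : ∀ i j k : Fin 3, (k : ℕ) + 3 ≤ i + j + 1 → a i + b j ≤ g k) :
    0 ≤ sixJ3Int a b g ∧ 6 ∣ sixJ3Int a b g := by
  have := hup 0 0 0 (by decide); have := hup 0 1 1 (by decide); have := hup 1 0 1 (by decide)
  have := hup 0 2 2 (by decide); have := hup 2 0 2 (by decide); have := hup 1 1 2 (by decide)
  have := hlo 0 2 0 (by decide); have := hlo 2 0 0 (by decide); have := hlo 1 1 0 (by decide)
  have := hlo 1 2 1 (by decide); have := hlo 2 1 1 (by decide); have := hlo 2 2 2 (by decide)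
  rw [sixJ3Int, psi3Int, psi3Int]
  rcases abs_cases (a 1 + b 1 - g 1) with ⟨h, _⟩ | ⟨h, _⟩ <;> rw [h] <;> split_ifs <;> omega

theorem stmt7 (a b g : Fin 3 → ℤ)
    (ha : a 1 ≤ a 0 ∧ a 2 ≤ a 1) (hb : b 1 ≤ b 0 ∧ b 2 ≤ b 1) (hg : g 1 ≤ g 0 ∧ g 2 ≤ g 1)
    (htr : g 0 + g 1 + g 2 = a 0 + a 1 + a 2 + (b 0 + b 1 + b 2))
    (hH : HornMem (fun i => (a i : ℝ)) (fun i => (b i : ℝ)) (fun i => (g i : ℝ))) :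
    ∃ k : ℕ, J3 (fun i => (a i : ℝ)) (fun i => (b i : ℝ)) (fun i => (g i : ℝ)) = (k : ℝ) := by
  obtain ⟨A, B, hA, hB, hC⟩ := hH
  obtain ⟨hnonneg, m, hm⟩ := sixJ3Int_nonneg_and_dvd ha hb hg htr
    (fun i j k hk => by exact_mod_cast hA.weyl_upper hB hC hk)
    (fun i j k hk => by exact_mod_cast hA.weyl_lower hB hC hk)
  lift m to ℕ using by omega
  refine ⟨m, ?_⟩
  rw [J3_intCast, hm]
  push_cast
  ring
end
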